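/- For an integer ℓ, there exists an acute lattice triangle with lattice perimeter ℓ whose orthocenter is a lattice point, if and only if ℓ = 6 or ℓ ≥ 8. -/

import Mathlib

/-- Lattice length of the segment joining two lattice points. -/
def llen (P Q : ℤ × ℤ) : ℕ := Int.gcd (P.1 - Q.1) (P.2 - Q.2)

/-- Integer dot product on `ℤ × ℤ`. -/
def dotv (u v : ℤ × ℤ) : ℤ := u.1 * v.1 + u.2 * v.2

/-- The three vertices are not collinear (a genuine triangle). -/
def Noncollinear (V₀ V₁ V₂ : ℤ × ℤ) : Prop :=
  (V₁.1 - V₀.1) * (V₂.2 - V₀.2) - (V₂.1 - V₀.1) * (V₁.2 - V₀.2) ≠ 0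

/-- All three interior angles are strictly acute (positive dot products at each vertex). -/
def IsAcute (V₀ V₁ V₂ : ℤ × ℤ) : Prop :=
  0 < dotv (V₁ - V₀) (V₂ - V₀) ∧ 0 < dotv (V₀ - V₁) (V₂ - V₁) ∧
    0 < dotv (V₀ - V₂) (V₁ - V₂)

/-- `H` is the orthocenter of the triangle `V₀V₁V₂`. -/
def IsOrthocenter (H V₀ V₁ V₂ : ℤ × ℤ) : Prop :=
  dotv (H - V₀) (V₁ - V₂) = 0 ∧ dotv (H - V₁) (V₂ - V₀) = 0 ∧
    dotv (H - V₂) (V₀ - V₁) = 0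

/-- `F` is the circumcenter of the triangle `V₀V₁V₂` (equidistant from the vertices). -/
def IsCircumcenter (F V₀ V₁ V₂ : ℤ × ℤ) : Prop :=
  dotv (F - V₀) (F - V₀) = dotv (F - V₁) (F - V₁) ∧
    dotv (F - V₀) (F - V₀) = dotv (F - V₂) (F - V₂)

/-- Lattice perimeter of a lattice triangle. -/
def latPerim (V₀ V₁ V₂ : ℤ × ℤ) : ℕ := llen V₀ V₁ + llen V₁ V₂ + llen V₀ V₂

/-- The interior angle of the triangle at vertex `V`, with the other vertices `A`, `B`. -/
noncomputable def angleAt (V A B : ℤ × ℤ) : ℝ :=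
  Real.arccos ((((A.1 - V.1) * (B.1 - V.1) + (A.2 - V.2) * (B.2 - V.2) : ℤ) : ℝ) /
    (Real.sqrt (((A.1 - V.1) ^ 2 + (A.2 - V.2) ^ 2 : ℤ)) *
      Real.sqrt (((B.1 - V.1) ^ 2 + (B.2 - V.2) ^ 2 : ℤ))))

/-!
Let `n_A` be the lattice length of the side opposite the vertex `A` and `r_A` its primitive
direction, so `N_A = |r_A|² ≡ 1, 2 (mod 4)`. As `AH ⊥ BC`, a lattice orthocenter gives
`AH = d_A · r_A^⊥` with `d_A ∈ ℤ`, and then `cot A = AH / BC = d_A / n_A`, with `d_A > 0` as the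
triangle is acute. The identity `cot A cot B + cot B cot C + cot C cot A = 1` becomes
`n_A n_B n_C = Σ n_A d_B d_C`, which forces `n_A + n_B + n_C ≥ 6`; with sum `7` its only
solution is `n = (2, 2, 3)`, `d = (1, 2, 1)` up to symmetry, and this is ruled out by
`AH² + BC² = 4R²`, i.e. `(n_A² + d_A²) N_A` does not depend on `A`, together with
`N ≡ 1, 2 (mod 4)`.

Conversely, for coprime `0 < v < h` the triangle `(-h, 0), (v, 0), (0, h)` is acute with
orthocenter `(0, v)` and lattice perimeter `2h + v + 1`; `v ∈ {1, 2, 4}` gives every `ℓ ≥ 6`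
except `7` and `11`, and `(-1, 0), (6, 0), (0, 3)` with orthocenter `(0, 2)` gives `11`.
-/

def crossv (u v : ℤ × ℤ) : ℤ := u.1 * v.2 - u.2 * v.1

lemma dotv_comm (u v : ℤ × ℤ) : dotv u v = dotv v u := by
  unfold dotv; ring

lemma llen_comm (P Q : ℤ × ℤ) : llen P Q = llen Q P := by
  rw [llen, llen, ← neg_sub Q.1, ← neg_sub Q.2, Int.neg_gcd, Int.gcd_neg]

lemma llen_pos {P Q : ℤ × ℤ} (h : P ≠ Q) : 0 < llen P Q := by
  refine Nat.pos_of_ne_zero fun h0 => h ?_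
  obtain ⟨h1, h2⟩ := Int.gcd_eq_zero_iff.mp h0
  exact Prod.ext (sub_eq_zero.mp h1) (sub_eq_zero.mp h2)

lemma exists_eq_llen_smul (P Q : ℤ × ℤ) (h : P ≠ Q) :
    ∃ r : ℤ × ℤ, Int.gcd r.1 r.2 = 1 ∧ P - Q = (llen P Q : ℤ) • r := by
  obtain ⟨r₁, r₂, hr, h₁, h₂⟩ := Int.exists_gcd_one (llen_pos h)
  refine ⟨(r₁, r₂), hr, Prod.ext ?_ ?_⟩
  · simp only [Prod.fst_sub, Prod.smul_fst, smul_eq_mul, llen]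
    rw [mul_comm]; exact h₁
  · simp only [Prod.snd_sub, Prod.smul_snd, smul_eq_mul, llen]
    rw [mul_comm]; exact h₂

lemma exists_eq_smul_rot {w r : ℤ × ℤ} (hr : Int.gcd r.1 r.2 = 1) (hw : dotv w r = 0) :
    ∃ δ : ℤ, w = δ • (-r.2, r.1) := by
  obtain ⟨α, β, hαβ⟩ := Int.isCoprime_iff_gcd_eq_one.mpr hr
  unfold dotv at hw
  refine ⟨α * w.2 - β * w.1, Prod.ext ?_ ?_⟩ <;> simp only [smul_eq_mul, Prod.smul_mk]
  · linear_combination -w.1 * hαβ + α * hw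
  · linear_combination -w.2 * hαβ + β * hw

lemma sq_add_sq_emod_four {x y : ℤ} (h : Int.gcd x y = 1) :
    (x ^ 2 + y ^ 2) % 4 = 1 ∨ (x ^ 2 + y ^ 2) % 4 = 2 := by
  have even_sq {z : ℤ} (hz : Even z) : 4 ∣ z ^ 2 := by
    simpa using pow_dvd_pow_of_dvd hz.two_dvd 2
  rcases Int.even_or_odd x with hx | hx <;> rcases Int.even_or_odd y with hy | hy
  · have : (2 : ℤ) ∣ (Int.gcd x y : ℤ) := Int.dvd_coe_gcd hx.two_dvd hy.two_dvd
    rw [h] at this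
    norm_num at this
  · have := even_sq hx; have := Int.sq_mod_four_eq_one_of_odd hy; omega
  · have := even_sq hy; have := Int.sq_mod_four_eq_one_of_odd hx; omega
  · have := Int.sq_mod_four_eq_one_of_odd hx; have := Int.sq_mod_four_eq_one_of_odd hy; omega

section Arithmetic

/-! In this section `d₀ / a`, `d₁ / b`, `d₂ / c` stand for the cotangents of the angles, so
`hcot` below is `Σ cot A cot B = 1`. -/

variable {a b c d₀ d₁ d₂ : ℤ}

lemma mul_mul_eq_of_cot {x₀ x₁ x₂ p : ℤ} (hp : p ≠ 0)
    (hsum : x₀ * x₁ + x₁ * x₂ + x₂ * x₀ = p ^ 2)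
    (h₀ : a * x₀ = d₀ * p) (h₁ : b * x₁ = d₁ * p) (h₂ : c * x₂ = d₂ * p) :
    a * b * c = a * d₁ * d₂ + b * d₀ * d₂ + c * d₀ * d₁ := by
  refine mul_right_cancel₀ (pow_ne_zero 2 hp) ?_
  linear_combination -(a * b * c) * hsum + (c * b * x₁ + b * d₂ * p) * h₀ +
    (c * d₀ * p + a * c * x₂) * h₁ + (a * d₁ * p + b * a * x₀) * h₂

lemma six_le_add_of_cot (ha : 0 < a) (hb : 0 < b) (hc : 0 < c)
    (hd₀ : 0 < d₀) (hd₁ : 0 < d₁) (hd₂ : 0 < d₂)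
    (hcot : a * b * c = a * d₁ * d₂ + b * d₀ * d₂ + c * d₀ * d₁) :
    6 ≤ a + b + c := by
  have hsum : a + b + c ≤ a * b * c := by
    have h₁₂ : 1 ≤ d₁ * d₂ := one_le_mul_of_one_le_of_one_le hd₁ hd₂
    have h₀₂ : 1 ≤ d₀ * d₂ := one_le_mul_of_one_le_of_one_le hd₀ hd₂
    have h₀₁ : 1 ≤ d₀ * d₁ := one_le_mul_of_one_le_of_one_le hd₀ hd₁
    nlinarith
  by_contra! h
  have : a ≤ 3 := by omega
  have : b ≤ 3 := by omega
  have : c ≤ 3 := by omega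
  interval_cases a <;> interval_cases b <;> interval_cases c <;> omega

lemma add_ne_seven_of_cot {N₀ N₁ N₂ : ℤ} (ha : 0 < a) (hb : 0 < b) (hc : 0 < c)
    (hd₀ : 0 < d₀) (hd₁ : 0 < d₁) (hd₂ : 0 < d₂)
    (hN₁ : N₁ % 4 = 1 ∨ N₁ % 4 = 2) (hN₂ : N₂ % 4 = 1 ∨ N₂ % 4 = 2)
    (hcot : a * b * c = a * d₁ * d₂ + b * d₀ * d₂ + c * d₀ * d₁)
    (h₁₀ : (b ^ 2 + d₁ ^ 2) * N₁ = (a ^ 2 + d₀ ^ 2) * N₀)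
    (h₂₁ : (c ^ 2 + d₂ ^ 2) * N₂ = (b ^ 2 + d₁ ^ 2) * N₁) :
    a + b + c ≠ 7 := by
  intro h7
  have h₀ : d₀ * (b + c) < a * b * c := by
    nlinarith [mul_pos ha (mul_pos hd₁ hd₂), mul_pos hb hd₀, mul_pos hc hd₀]
  have h₁ : d₁ * (a + c) < a * b * c := by
    nlinarith [mul_pos hb (mul_pos hd₀ hd₂), mul_pos ha hd₁, mul_pos hc hd₁]
  have h₂ : d₂ * (a + b) < a * b * c := by
    nlinarith [mul_pos hc (mul_pos hd₀ hd₁), mul_pos ha hd₂, mul_pos hb hd₂]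
  obtain rfl : c = 7 - a - b := by omega
  have : a ≤ 5 := by omega
  have : b ≤ 5 := by omega
  interval_cases a <;> interval_cases b <;>
    (have : d₀ ≤ 2 := by omega
     have : d₁ ≤ 2 := by omega
     have : d₂ ≤ 2 := by omega
     interval_cases d₀ <;> interval_cases d₁ <;> interval_cases d₂ <;> omega)

end Arithmetic

section Triangle

variable {H V₀ V₁ V₂ : ℤ × ℤ}

lemma IsAcute.rotate (h : IsAcute V₀ V₁ V₂) : IsAcute V₁ V₂ V₀ :=
  ⟨dotv_comm (V₀ - V₁) _ ▸ h.2.1, dotv_comm (V₀ - V₂) _ ▸ h.2.2, h.1⟩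

lemma IsOrthocenter.rotate (h : IsOrthocenter H V₀ V₁ V₂) : IsOrthocenter H V₁ V₂ V₀ :=
  ⟨h.2.1, h.2.2, h.1⟩

lemma IsAcute.ne₁₂ (h : IsAcute V₀ V₁ V₂) : V₁ ≠ V₂ := by
  rintro rfl
  simp [IsAcute, dotv] at h

lemma crossv_rotate (V₀ V₁ V₂ : ℤ × ℤ) :
    crossv (V₂ - V₁) (V₀ - V₁) = crossv (V₁ - V₀) (V₂ - V₀) := by
  simp only [crossv, Prod.fst_sub, Prod.snd_sub]; ring

lemma sum_dotv_mul_dotv_eq_crossv_sq (V₀ V₁ V₂ : ℤ × ℤ) :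
    dotv (V₁ - V₀) (V₂ - V₀) * dotv (V₂ - V₁) (V₀ - V₁) +
      dotv (V₂ - V₁) (V₀ - V₁) * dotv (V₀ - V₂) (V₁ - V₂) +
      dotv (V₀ - V₂) (V₁ - V₂) * dotv (V₁ - V₀) (V₂ - V₀) = crossv (V₁ - V₀) (V₂ - V₀) ^ 2 := by
  simp only [dotv, crossv, Prod.fst_sub, Prod.snd_sub]; ring

/-- Both sides are the squared circumdiameter. -/
lemma IsOrthocenter.dotv_add_dotv_rotate (h : IsOrthocenter H V₀ V₁ V₂) :
    dotv (V₂ - V₀) (V₂ - V₀) + dotv (H - V₁) (H - V₁) =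
      dotv (V₁ - V₂) (V₁ - V₂) + dotv (H - V₀) (H - V₀) := by
  have h₂ := h.2.2
  simp only [dotv, Prod.fst_sub, Prod.snd_sub] at h₂ ⊢
  linear_combination 2 * h₂

/-- The signed form of `cot A = AH / BC`. -/
lemma IsOrthocenter.crossv_mul_crossv (h : IsOrthocenter H V₀ V₁ V₂) :
    crossv (H - V₀) (V₁ - V₂) * crossv (V₁ - V₀) (V₂ - V₀) =
      -(dotv (V₁ - V₀) (V₂ - V₀) * dotv (V₁ - V₂) (V₁ - V₂)) := by
  obtain ⟨h₀, h₁, -⟩ := h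
  simp only [dotv, crossv, Prod.fst_sub, Prod.snd_sub] at h₀ h₁ ⊢
  linear_combination ((V₁.1 - V₂.1) * (V₂.1 - V₀.1) + (V₁.2 - V₂.2) * (V₂.2 - V₀.2)) * h₀ -
    ((V₁.1 - V₂.1) ^ 2 + (V₁.2 - V₂.2) ^ 2) * h₁

/-- `d / llen V₁ V₂` is the cotangent of the angle at `V₀`, and `N` the squared norm of the
primitive direction of `V₁V₂`. -/
lemma IsOrthocenter.exists_cot_eq (hH : IsOrthocenter H V₀ V₁ V₂) (hacute : IsAcute V₀ V₁ V₂) :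
    ∃ d N : ℤ, 0 < d ∧ (N % 4 = 1 ∨ N % 4 = 2) ∧
      llen V₁ V₂ * dotv (V₁ - V₀) (V₂ - V₀) = d * |crossv (V₁ - V₀) (V₂ - V₀)| ∧
      (llen V₁ V₂ ^ 2 + d ^ 2) * N = dotv (V₁ - V₂) (V₁ - V₂) + dotv (H - V₀) (H - V₀) := by
  obtain ⟨r, hr, hside⟩ := exists_eq_llen_smul V₁ V₂ hacute.ne₁₂
  have hn : (0 : ℤ) < llen V₁ V₂ := by exact_mod_cast llen_pos hacute.ne₁₂
  set n : ℤ := (llen V₁ V₂ : ℤ)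
  have hperp : dotv (H - V₀) r = 0 := by
    have h₀ := hH.1
    rw [hside] at h₀
    simp only [dotv, Prod.smul_fst, Prod.smul_snd, smul_eq_mul] at h₀ ⊢
    exact (mul_eq_zero.mp (by linear_combination h₀)).resolve_left hn.ne'
  obtain ⟨δ, hδ⟩ := exists_eq_smul_rot hr hperp
  have hN := sq_add_sq_emod_four hr
  have hN_pos : 0 < r.1 ^ 2 + r.2 ^ 2 := by
    have := add_nonneg (sq_nonneg r.1) (sq_nonneg r.2)
    omega
  have hcot : n * dotv (V₁ - V₀) (V₂ - V₀) = δ * crossv (V₁ - V₀) (V₂ - V₀) := by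
    have key := hH.crossv_mul_crossv
    rw [hδ, hside] at key
    simp only [crossv, dotv, Prod.smul_fst, Prod.smul_snd, smul_eq_mul] at key ⊢
    refine mul_left_cancel₀ (mul_pos hn hN_pos).ne' ?_
    linear_combination key
  have hδP : 0 < δ * crossv (V₁ - V₀) (V₂ - V₀) := hcot ▸ mul_pos hn hacute.1
  refine ⟨|δ|, r.1 ^ 2 + r.2 ^ 2, ?_, hN, ?_, ?_⟩
  · exact abs_pos.mpr (left_ne_zero_of_mul hδP.ne')
  · rw [hcot, ← abs_mul, abs_of_pos hδP]
  · rw [hside, hδ, sq_abs]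
    simp only [dotv, Prod.smul_fst, Prod.smul_snd, smul_eq_mul]
    ring

theorem IsOrthocenter.six_le_latPerim_and_ne_seven (hH : IsOrthocenter H V₀ V₁ V₂)
    (hacute : IsAcute V₀ V₁ V₂) : 6 ≤ latPerim V₀ V₁ V₂ ∧ latPerim V₀ V₁ V₂ ≠ 7 := by
  obtain ⟨d₀, N₀, hd₀, -, hcot₀, hT₀⟩ := hH.exists_cot_eq hacute
  obtain ⟨d₁, N₁, hd₁, hN₁, hcot₁, hT₁⟩ := hH.rotate.exists_cot_eq hacute.rotate
  obtain ⟨d₂, N₂, hd₂, hN₂, hcot₂, hT₂⟩ := hH.rotate.rotate.exists_cot_eq hacute.rotate.rotate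
  rw [crossv_rotate] at hcot₁
  rw [← crossv_rotate] at hcot₂
  have hpos (P Q : ℤ × ℤ) (h : P ≠ Q) : (0 : ℤ) < llen P Q := by exact_mod_cast llen_pos h
  have hP : |crossv (V₁ - V₀) (V₂ - V₀)| ≠ 0 :=
    right_ne_zero_of_mul (hcot₀ ▸ mul_pos (hpos _ _ hacute.ne₁₂) hacute.1).ne'
  have hcot := mul_mul_eq_of_cot hP
    (by rw [sq_abs]; exact sum_dotv_mul_dotv_eq_crossv_sq V₀ V₁ V₂) hcot₀ hcot₁ hcot₂
  have h6 := six_le_add_of_cot (hpos _ _ hacute.ne₁₂) (hpos _ _ hacute.rotate.ne₁₂)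
    (hpos _ _ hacute.rotate.rotate.ne₁₂) hd₀ hd₁ hd₂ hcot
  have h7 := add_ne_seven_of_cot (hpos _ _ hacute.ne₁₂) (hpos _ _ hacute.rotate.ne₁₂)
    (hpos _ _ hacute.rotate.rotate.ne₁₂) hd₀ hd₁ hd₂ hN₁ hN₂ hcot
    (by rw [hT₁, hT₀, hH.dotv_add_dotv_rotate])
    (by rw [hT₂, hT₁, hH.rotate.dotv_add_dotv_rotate])
  rw [llen_comm V₂] at h6 h7
  unfold latPerim
  omega

end Triangle

lemma exists_latPerim_eq_of_coprime {ℓ : ℕ} (h v : ℕ) (hv : 0 < v) (hvh : v < h)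
    (hcop : Nat.Coprime v h) (hℓ : 2 * h + v + 1 = ℓ) :
    ∃ V₀ V₁ V₂ H : ℤ × ℤ, IsAcute V₀ V₁ V₂ ∧ IsOrthocenter H V₀ V₁ V₂ ∧ latPerim V₀ V₁ V₂ = ℓ := by
  have hv' : (0 : ℤ) < v := by exact_mod_cast hv
  have hvh' : (v : ℤ) < h := by exact_mod_cast hvh
  refine ⟨(-h, 0), (v, 0), (0, h), (0, v), ?_, ?_, ?_⟩
  · refine ⟨?_, ?_, ?_⟩ <;> simp only [dotv, Prod.mk_sub_mk] <;> nlinarith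
  · refine ⟨?_, ?_, ?_⟩ <;> simp only [dotv, Prod.mk_sub_mk] <;> ring
  · have hbase : (-(h : ℤ) - v).natAbs = h + v := by omega
    simp only [latPerim, llen, sub_self, Int.gcd_zero, hbase, sub_zero, zero_sub, Int.gcd_neg,
      Int.gcd_natCast_natCast, hcop.gcd_eq_one, Int.gcd_self, Int.natAbs_neg, Int.natAbs_natCast]
    omega

lemma exists_latPerim_eq_eleven :
    ∃ V₀ V₁ V₂ H : ℤ × ℤ, IsAcute V₀ V₁ V₂ ∧ IsOrthocenter H V₀ V₁ V₂ ∧ latPerim V₀ V₁ V₂ = 11 :=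
  ⟨(-1, 0), (6, 0), (0, 3), (0, 2), by norm_num [IsAcute, dotv],
    by norm_num [IsOrthocenter, dotv], rfl⟩

theorem exists_latPerim_eq {ℓ : ℕ} (hℓ : ℓ = 6 ∨ 8 ≤ ℓ) :
    ∃ V₀ V₁ V₂ H : ℤ × ℤ, IsAcute V₀ V₁ V₂ ∧ IsOrthocenter H V₀ V₁ V₂ ∧ latPerim V₀ V₁ V₂ = ℓ := by
  rcases Nat.even_or_odd' ℓ with ⟨k, rfl | rfl⟩
  · exact exists_latPerim_eq_of_coprime (k - 1) 1 one_pos (by omega) (Nat.coprime_one_left _)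
      (by omega)
  rcases Nat.even_or_odd' k with ⟨j, rfl | rfl⟩
  · have hodd : Odd (2 * j - 1) := ⟨j - 1, by omega⟩
    exact exists_latPerim_eq_of_coprime (2 * j - 1) 2 two_pos (by omega)
      (Nat.coprime_two_left.mpr hodd) (by omega)
  · obtain rfl | hj : j = 2 ∨ 3 ≤ j := by omega
    · exact exists_latPerim_eq_eleven
    have hodd : Odd (2 * j - 1) := ⟨j - 1, by omega⟩
    exact exists_latPerim_eq_of_coprime (2 * j - 1) 4 (by norm_num) (by omega)
      (Nat.Coprime.pow_left 2 (Nat.coprime_two_left.mpr hodd)) (by omega)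

theorem stmt14 (ℓ : ℕ) :
    (∃ V₀ V₁ V₂ H : ℤ × ℤ, IsAcute V₀ V₁ V₂ ∧ IsOrthocenter H V₀ V₁ V₂ ∧
      latPerim V₀ V₁ V₂ = ℓ) ↔ (ℓ = 6 ∨ 8 ≤ ℓ) := by
  refine ⟨?_, exists_latPerim_eq⟩
  rintro ⟨V₀, V₁, V₂, H, hacute, hH, rfl⟩
  obtain ⟨h6, h7⟩ := hH.six_le_latPerim_and_ne_seven hacute
  omega
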